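/- Lower bound for Riesz means of the example function: let f = D_{2^{2n+1}} − D_{2^{2n}} on the dyadic group, q = 2^{2n} + 2^{2s} with 0 ≤ s < n, and l_q = Σ_{k=1}^q 1/k. Then for every x ∈ I_{2s} \ I_{2s+1}, |R_q f(x)| ≥ c · 4^{2s} / (l_q · 2^{2n}) for an absolute constant c > 0, where R_q f = (1/l_q) Σ_{j=1}^q S_j f / j. -/

import Mathlib

/-!
Write `A = 2^(2n)` and `B = 2^(2s)`. The Walsh coefficients of `f = D_{2A} - D_A` are the
indicator of `[A, 2A)`, so `S_j f = 0` for `j ≤ A` and `S_{A+m} f = ∑_{k<m} w_{A+k}`. Since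
`w_{A+k} = w_A w_k` for `k < A`, and `w_k = 1` on `I_{2s}` for `k < B`, this gives
`S_{A+m} f(x) = m w_A(x)` for `m ≤ B`. Hence `|R_q f(x)| = (1/l_q) ∑_{m=1}^{B} m/(A+m)`, and
bounding each denominator by `2A` leaves `∑ m ≥ B²/2`, i.e. the constant `c = 1/4`.
-/

open Finset

/-- The dyadic group `G = (ℤ/2)^ℕ`. -/
abbrev G := ℕ → ZMod 2

/-- Walsh–Paley functions: `w n x = ∏ k, ((-1)^(x k))^(n_k)` for the binary expansion of `n`. -/
noncomputable def walsh (n : ℕ) (x : G) : ℝ :=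
  ∏ k ∈ Finset.range (n + 1), if n.testBit k then (-1 : ℝ) ^ (x k).val else 1

/-- Walsh–Dirichlet kernels `D m = ∑_{k<m} w k`. -/
noncomputable def dirichlet (m : ℕ) (x : G) : ℝ :=
  ∑ k ∈ Finset.range m, walsh k x

/-- Walsh–Fejér kernels `K n = (1/n) ∑_{k<n} D k`. -/
noncomputable def fejer (n : ℕ) (x : G) : ℝ :=
  (1 / (n : ℝ)) * ∑ k ∈ Finset.range n, dirichlet k x

/-- The cylinder set `I_N = {t : t_0 = ⋯ = t_{N-1} = 0}`. -/
def IN (N : ℕ) : Set G := {t | ∀ j < N, t j = 0}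

open MeasureTheory

instance : TopologicalSpace (ZMod 2) := ⊥
instance : DiscreteTopology (ZMod 2) := ⟨rfl⟩
instance : MeasurableSpace G := borel G
instance : BorelSpace G := ⟨rfl⟩

/-- The normalized Haar measure on the compact group `G`. -/
noncomputable def haarG : Measure G :=
  Measure.addHaarMeasure ⟨⟨Set.univ, isCompact_univ⟩, by simp⟩

lemma two_pow_xor_eq_add_of_lt {a m : ℕ} (h : m < 2 ^ a) : 2 ^ a ^^^ m = 2 ^ a + m := by
  refine Nat.eq_of_testBit_eq fun j => ?_
  rcases lt_trichotomy j a with hj | rfl | hj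
  · rw [Nat.testBit_xor, Nat.testBit_two_pow_of_ne hj.ne', Nat.testBit_two_pow_add_gt hj]
    simp
  · rw [Nat.testBit_xor, Nat.testBit_two_pow_self, Nat.testBit_two_pow_add_eq,
      Nat.testBit_eq_false_of_lt h]
    rfl
  · have hlt : 2 ^ a + m < 2 ^ j :=
      calc 2 ^ a + m < 2 ^ (a + 1) := by rw [pow_succ]; omega
        _ ≤ 2 ^ j := Nat.pow_le_pow_right two_pos hj
    rw [Nat.testBit_xor, Nat.testBit_two_pow_of_ne hj.ne,
      Nat.testBit_eq_false_of_lt (lt_of_le_of_lt (Nat.le_add_left m _) hlt),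
      Nat.testBit_eq_false_of_lt hlt]
    rfl

lemma neg_one_pow_val_add (a b : ZMod 2) :
    (-1 : ℝ) ^ (a + b).val = (-1) ^ a.val * (-1) ^ b.val := by
  rw [ZMod.val_add, ← neg_one_pow_eq_pow_mod_two, pow_add]

lemma walsh_eq_prod_range {n N : ℕ} (hN : n < N) (x : G) :
    walsh n x = ∏ k ∈ range N, if n.testBit k then (-1 : ℝ) ^ (x k).val else 1 := by
  refine prod_subset (range_subset_range.mpr hN) fun k _ hk => ?_
  rw [mem_range, not_lt] at hk
  rw [Nat.testBit_eq_false_of_lt (Nat.lt_two_pow_self.trans_le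
    (Nat.pow_le_pow_right two_pos (by omega)))]
  rfl

lemma walsh_zero (x : G) : walsh 0 x = 1 := by
  simp [walsh]

lemma walsh_mul_walsh (k i : ℕ) (x : G) : walsh k x * walsh i x = walsh (k ^^^ i) x := by
  have hlt : ∀ m ≤ max k i, m < 2 ^ (max k i + 1) := fun m hm =>
    hm.trans_lt (Nat.lt_two_pow_self.trans (Nat.pow_lt_pow_right one_lt_two (Nat.lt_succ_self _)))
  rw [walsh_eq_prod_range (hlt k (le_max_left _ _)), walsh_eq_prod_range (hlt i (le_max_right _ _)),
    walsh_eq_prod_range (Nat.xor_lt_two_pow (hlt k (le_max_left _ _)) (hlt i (le_max_right _ _))),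
    ← prod_mul_distrib]
  refine prod_congr rfl fun j _ => ?_
  rw [Nat.testBit_xor]
  cases k.testBit j <;> cases i.testBit j <;> simp [← pow_add, ← two_mul, pow_mul]

lemma walsh_two_pow_add {a m : ℕ} (hm : m < 2 ^ a) (x : G) :
    walsh (2 ^ a + m) x = walsh (2 ^ a) x * walsh m x := by
  rw [walsh_mul_walsh, two_pow_xor_eq_add_of_lt hm]

lemma walsh_add (n : ℕ) (x y : G) : walsh n (x + y) = walsh n x * walsh n y := by
  simp only [walsh, ← prod_mul_distrib]
  refine prod_congr rfl fun k _ => ?_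
  split_ifs <;> simp [neg_one_pow_val_add]

lemma abs_walsh (n : ℕ) (x : G) : |walsh n x| = 1 := by
  rw [walsh, abs_prod]
  refine prod_eq_one fun k _ => ?_
  split_ifs <;> simp

lemma walsh_eq_one_of_mem_IN {L m : ℕ} {x : G} (hx : x ∈ IN L) (hm : m < 2 ^ L) :
    walsh m x = 1 := by
  refine prod_eq_one fun k _ => ?_
  by_cases hk : m.testBit k
  · have hkL : k < L := by
      by_contra! hLk
      rw [Nat.testBit_eq_false_of_lt (hm.trans_le (Nat.pow_le_pow_right two_pos hLk))] at hk
      exact Bool.false_ne_true hk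
    simp [hk, hx k hkL]
  · simp [hk]

lemma walsh_single_of_testBit {n b : ℕ} (hb : n.testBit b) : walsh n (Pi.single b 1) = -1 := by
  have hbn : b ∈ range (n + 1) :=
    mem_range.mpr (Nat.lt_succ_of_le ((Nat.lt_two_pow_self).le.trans (Nat.ge_two_pow_of_testBit hb)))
  rw [walsh, prod_eq_single_of_mem b hbn fun k _ hkb => by simp [hkb]]
  simp [hb, ZMod.val_one]

instance : IsProbabilityMeasure haarG := ⟨Measure.addHaarMeasure_self⟩

instance : haarG.IsAddLeftInvariant := by unfold haarG; infer_instance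

lemma continuous_walsh (n : ℕ) : Continuous (walsh n) :=
  continuous_finsetProd _ fun k _ => by
    split_ifs
    · exact (continuous_of_discreteTopology (f := fun v : ZMod 2 => (-1 : ℝ) ^ v.val)).comp
        (continuous_apply k)
    · exact continuous_const

lemma integrable_walsh (n : ℕ) : Integrable (walsh n) haarG :=
  (continuous_walsh n).integrable_of_hasCompactSupport (isClosed_tsupport _).isCompact

lemma integral_walsh_of_ne_zero {n : ℕ} (hn : n ≠ 0) : ∫ x, walsh n x ∂haarG = 0 := by
  obtain ⟨b, hb⟩ : ∃ b, n.testBit b := Nat.exists_testBit_of_ne_zero hn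
  -- translating by the point with a single `1` in coordinate `b` flips the sign of `walsh n`
  have htrans := integral_add_left_eq_self (μ := haarG) (walsh n) (Pi.single b 1)
  simp only [walsh_add, walsh_single_of_testBit hb, neg_one_mul, integral_neg] at htrans
  linarith

lemma integral_walsh_mul_walsh (k i : ℕ) :
    ∫ x, walsh k x * walsh i x ∂haarG = if k = i then 1 else 0 := by
  simp only [walsh_mul_walsh]
  split_ifs with h
  · simp [h, walsh_zero]
  · exact integral_walsh_of_ne_zero (by rwa [Ne, Nat.xor_eq_zero_iff])

noncomputable def walshCoeff (f : G → ℝ) (i : ℕ) : ℝ := ∫ y, f y * walsh i y ∂haarG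

noncomputable def walshPartialSum (f : G → ℝ) (j : ℕ) (x : G) : ℝ :=
  ∑ k ∈ range j, walshCoeff f k * walsh k x

lemma walshCoeff_sum_walsh (s : Finset ℕ) (i : ℕ) :
    walshCoeff (fun y => ∑ k ∈ s, walsh k y) i = if i ∈ s then 1 else 0 := by
  simp only [walshCoeff, sum_mul]
  rw [integral_finsetSum _ fun k _ => by
    simpa only [walsh_mul_walsh] using integrable_walsh (k ^^^ i)]
  simp only [integral_walsh_mul_walsh, sum_ite_eq']

lemma walshPartialSum_sum_walsh_Ico {a b j : ℕ} (hj : j ≤ b) (x : G) :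
    walshPartialSum (fun y => ∑ k ∈ Ico a b, walsh k y) j x = ∑ k ∈ Ico a j, walsh k x := by
  simp only [walshPartialSum, walshCoeff_sum_walsh, ite_mul, one_mul, zero_mul]
  rw [sum_ite_mem]
  congr 1
  ext k
  simp only [mem_inter, mem_range, mem_Ico]
  omega

lemma dirichlet_sub_dirichlet {m n : ℕ} (h : m ≤ n) (x : G) :
    dirichlet n x - dirichlet m x = ∑ k ∈ Ico m n, walsh k x :=
  (sum_Ico_eq_sub _ h).symm

lemma sum_Ico_walsh_of_mem_IN {a L m : ℕ} {x : G} (hx : x ∈ IN L) (hLa : L ≤ a)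
    (hm : m ≤ 2 ^ L) : ∑ k ∈ Ico (2 ^ a) (2 ^ a + m), walsh k x = m * walsh (2 ^ a) x := by
  have hLa' : 2 ^ L ≤ 2 ^ a := Nat.pow_le_pow_right two_pos hLa
  rw [sum_Ico_eq_sum_range, Nat.add_sub_cancel_left, sum_congr rfl fun i hi => ?_, sum_const, card_range, nsmul_eq_mul]
  have hi : i < 2 ^ L := (mem_range.mp hi).trans_le hm
  rw [walsh_two_pow_add (hi.trans_le hLa'), walsh_eq_one_of_mem_IN hx hi, mul_one]

lemma sum_Icc_one_add_of_eq_zero {M : Type*} [AddCommMonoid M] {g : ℕ → M} {A : ℕ}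
    (hg : ∀ j ≤ A, g j = 0) (B : ℕ) :
    ∑ j ∈ Icc 1 (A + B), g j = ∑ m ∈ Icc 1 B, g (A + m) := by
  induction B with
  | zero => simpa using sum_eq_zero fun j hj => hg j (mem_Icc.mp hj).2
  | succ B ih =>
    rw [← add_assoc, sum_Icc_succ_top (by omega), sum_Icc_succ_top (by omega), ih]
    rfl

lemma sq_div_two_le_sum_Icc (B : ℕ) : (B : ℝ) ^ 2 / 2 ≤ ∑ m ∈ Icc 1 B, (m : ℝ) := by
  induction B with
  | zero => simp
  | succ B ih =>
    rw [sum_Icc_succ_top (by omega)]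
    push_cast
    nlinarith

lemma sq_div_le_sum_Icc_div_add {A B : ℕ} (hBA : B ≤ A) :
    (B : ℝ) ^ 2 / (4 * A) ≤ ∑ m ∈ Icc 1 B, (m : ℝ) / (A + m) := by
  have hterm : ∀ m ∈ Icc 1 B, (m : ℝ) / (2 * A) ≤ m / (A + m) := fun m hm => by
    have hmA : (m : ℝ) ≤ A := by exact_mod_cast (mem_Icc.mp hm).2.trans hBA
    have hm1 : (1 : ℝ) ≤ m := by exact_mod_cast (mem_Icc.mp hm).1
    gcongr
    linarith
  calc (B : ℝ) ^ 2 / (4 * A) = ((B : ℝ) ^ 2 / 2) / (2 * A) := by ring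
    _ ≤ (∑ m ∈ Icc 1 B, (m : ℝ)) / (2 * A) := by gcongr; exact sq_div_two_le_sum_Icc B
    _ = ∑ m ∈ Icc 1 B, (m : ℝ) / (2 * A) := sum_div _ _ _
    _ ≤ _ := sum_le_sum hterm

lemma sum_Icc_walshPartialSum_div_of_mem_IN {a L : ℕ} {x : G} (hx : x ∈ IN L) (hLa : L ≤ a) :
    ∑ j ∈ Icc 1 (2 ^ a + 2 ^ L),
        walshPartialSum (fun y => ∑ k ∈ Ico (2 ^ a) (2 * 2 ^ a), walsh k y) j x / j =
      walsh (2 ^ a) x * ∑ m ∈ Icc (1 : ℕ) (2 ^ L), (m : ℝ) / (2 ^ a + m) := by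
  have hLa' : 2 ^ L ≤ 2 ^ a := Nat.pow_le_pow_right two_pos hLa
  rw [sum_Icc_one_add_of_eq_zero fun j hj => by
    rw [walshPartialSum_sum_walsh_Ico (by omega), Ico_eq_empty_of_le hj, sum_empty, zero_div],
    mul_sum]
  refine sum_congr rfl fun m hm => ?_
  have hmL := (mem_Icc.mp hm).2
  rw [walshPartialSum_sum_walsh_Ico (by omega), sum_Ico_walsh_of_mem_IN hx hLa hmL]
  push_cast
  ring

/-- **Lower bound for Riesz means of the example function.** Let
`f = D_{2^{2n+1}} − D_{2^{2n}}`, `q = 2^{2n} + 2^{2s}` with `0 ≤ s < n`, and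
`l_q = ∑_{k=1}^q 1/k`. Then there is an absolute constant `c > 0` such that for every
`x ∈ I_{2s} \ I_{2s+1}`, `|R_q f(x)| ≥ c · 4^{2s} / (l_q · 2^{2n})`, where
`R_q f = (1/l_q) ∑_{j=1}^q S_j f / j`. -/
theorem riesz_lower_bound_example :
    ∃ c : ℝ, 0 < c ∧ ∀ (n s : ℕ), s < n → ∀ (q : ℕ), q = 2 ^ (2 * n) + 2 ^ (2 * s) →
      ∀ (f : G → ℝ), (∀ y, f y = dirichlet (2 ^ (2 * n + 1)) y - dirichlet (2 ^ (2 * n)) y) →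
      ∀ (fhat : ℕ → ℝ), (∀ i, fhat i = ∫ y, f y * walsh i y ∂haarG) →
      ∀ (S : ℕ → G → ℝ), (∀ j y, S j y = ∑ k ∈ Finset.range j, fhat k * walsh k y) →
      ∀ (lq : ℝ), lq = ∑ k ∈ Finset.Icc 1 q, (1 : ℝ) / k →
      ∀ (x : G), (∀ j < 2 * s, x j = 0) → x (2 * s) = 1 →
      c * 4 ^ (2 * s) / (lq * 2 ^ (2 * n))
        ≤ |(1 / lq) * ∑ j ∈ Finset.Icc 1 q, S j x / (j : ℝ)| := by
  refine ⟨1 / 4, by norm_num, ?_⟩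
  intro n s hsn q hq f hf fhat hfhat S hS lq hlq x hx _
  have hBA : 2 ^ (2 * s) ≤ 2 ^ (2 * n) := Nat.pow_le_pow_right two_pos (by omega)
  have hf' : f = fun y => ∑ k ∈ Ico (2 ^ (2 * n)) (2 * 2 ^ (2 * n)), walsh k y := funext fun y => by
    rw [hf, pow_succ', dirichlet_sub_dirichlet (by omega)]
  have hS' : ∀ j, S j x = walshPartialSum f j x := fun j => by
    simp only [hS, hfhat, walshPartialSum, walshCoeff]
  have hRiesz : ∑ j ∈ Icc 1 q, S j x / j =
      walsh (2 ^ (2 * n)) x * ∑ m ∈ Icc (1 : ℕ) (2 ^ (2 * s)), (m : ℝ) / (2 ^ (2 * n) + m) := by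
    simp only [hS', hq, hf']
    exact sum_Icc_walshPartialSum_div_of_mem_IN hx (by omega)
  have hlq : 0 < lq := hlq ▸ sum_pos (fun k hk => by
    have : (1 : ℝ) ≤ k := by exact_mod_cast (mem_Icc.mp hk).1
    positivity) ⟨1, mem_Icc.mpr ⟨le_rfl, hq ▸ Nat.one_le_two_pow.trans (Nat.le_add_right _ _)⟩⟩
  have hbound := sq_div_le_sum_Icc_div_add hBA
  push_cast at hbound
  rw [hRiesz, abs_mul, abs_mul, abs_walsh, one_mul, abs_of_pos (by positivity),
    abs_of_nonneg (le_trans (by positivity) hbound)]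
  calc 1 / 4 * (4 : ℝ) ^ (2 * s) / (lq * 2 ^ (2 * n))
      = 1 / lq * (((2 : ℝ) ^ (2 * s)) ^ 2 / (4 * 2 ^ (2 * n))) := by
        rw [show (4 : ℝ) = 2 ^ 2 by norm_num, ← pow_mul, ← pow_mul, mul_comm 2 (2 * s)]
        field_simp
    _ ≤ _ := by gcongr
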